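/- arXiv:1507.07444 — 3 statements merged into one kernel-verified Lean document; each statement's English description precedes it below -/
import Mathlib

section
/- Let D ⊆ ℂ be a bounded measurable set, let F : ℂ → ℂ be integrable with support in D, and let c ∈ ℂ with d := dist(c, D) > 0. Define w(z) = (1/2π) ∫_D F(z')/(z − z') dA(z'). Then for every z with |z − c| < d, the series expansion w(z) = −(1/2π) ∑_{j=0}^∞ (z − c)^j ∫_D F(z') / (z' − c)^{j+1} dA(z') holds, with the series converging absolutely. -/
/-!
On the disc `‖z - c‖ < d = dist(c, D)` the Cauchy kernel expands as the geometric series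
`(z' - z)⁻¹ = ∑ (z - c)^j / (z' - c)^(j+1)`, uniformly for `z'` in `D`, with terms bounded by
`d⁻¹ (‖z - c‖ / d)^j`. Against the integrable density `F` these geometric bounds dominate the
series, so it may be integrated term by term, which gives both the absolute convergence and the
value of `w z`.
-/

open MeasureTheory Metric

theorem infDist_le_norm_sub_of_mem_closure {E : Type*} [SeminormedAddCommGroup E] {s : Set E}
    {x y : E} (hy : y ∈ closure s) : infDist x s ≤ ‖y - x‖ := by
  rw [← infDist_closure, ← dist_eq_norm, dist_comm]
  exact infDist_le_dist_of_mem hy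

theorem hasSum_pow_div_pow_succ_of_norm_lt {𝕜 : Type*} [NormedField 𝕜] [CompleteSpace 𝕜]
    {z w c : 𝕜} (h : ‖z - c‖ < ‖w - c‖) :
    HasSum (fun j : ℕ => (z - c) ^ j / (w - c) ^ (j + 1)) (w - z)⁻¹ := by
  have hwc : w - c ≠ 0 := norm_pos_iff.mp ((norm_nonneg _).trans_lt h)
  have hq : ‖(z - c) / (w - c)‖ < 1 := by
    rwa [norm_div, div_lt_one (norm_pos_iff.mpr hwc)]
  have hterm : ∀ j : ℕ, (z - c) ^ j / (w - c) ^ (j + 1) = ((z - c) / (w - c)) ^ j * (w - c)⁻¹ :=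
    fun j => by rw [div_pow, pow_succ]; field_simp
  have hlim : (w - z)⁻¹ = (1 - (z - c) / (w - c))⁻¹ * (w - c)⁻¹ := by
    rw [← mul_inv, sub_mul, div_mul_cancel₀ _ hwc]
    ring_nf
  simpa only [hterm, hlim] using (hasSum_geometric_of_norm_lt_one hq).mul_right (w - c)⁻¹

section GeometricallyBoundedWeights

variable {α 𝕜 : Type*} [MeasurableSpace α] {μ : Measure α} [RCLike 𝕜]
  {F : α → 𝕜} {g : ℕ → α → 𝕜} {C q : ℝ}

theorem summable_integral_norm_mul_of_norm_le_geometric (hF : Integrable F μ) (hq₀ : 0 ≤ q)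
    (hq₁ : q < 1) (hg : ∀ n, ∀ᵐ a ∂μ, ‖g n a‖ ≤ C * q ^ n) :
    Summable fun n => ∫ a, ‖g n a * F a‖ ∂μ := by
  refine .of_nonneg_of_le (fun n => integral_nonneg fun _ => norm_nonneg _) (fun n => ?_)
    ((summable_geometric_of_lt_one hq₀ hq₁).mul_left (C * ∫ a, ‖F a‖ ∂μ))
  calc ∫ a, ‖g n a * F a‖ ∂μ ≤ ∫ a, C * q ^ n * ‖F a‖ ∂μ := by
        refine integral_mono_of_nonneg (.of_forall fun _ => norm_nonneg _)
          (hF.norm.const_mul _) ?_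
        filter_upwards [hg n] with a ha
        rw [norm_mul]
        exact mul_le_mul_of_nonneg_right ha (norm_nonneg _)
    _ = C * (∫ a, ‖F a‖ ∂μ) * q ^ n := by
        rw [integral_const_mul]
        ring

theorem hasSum_integral_mul_of_norm_le_geometric (hF : Integrable F μ) (hq₀ : 0 ≤ q)
    (hq₁ : q < 1) (hg_meas : ∀ n, AEStronglyMeasurable (g n) μ)
    (hg : ∀ n, ∀ᵐ a ∂μ, ‖g n a‖ ≤ C * q ^ n) {G : α → 𝕜}
    (hG : ∀ᵐ a ∂μ, HasSum (fun n => g n a) (G a)) :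
    HasSum (fun n => ∫ a, g n a * F a ∂μ) (∫ a, G a * F a ∂μ) := by
  have hsum := hasSum_integral_of_summable_integral_norm (F := fun n a => g n a * F a)
    (fun n => hF.bdd_mul (hg_meas n) (hg n))
    (summable_integral_norm_mul_of_norm_le_geometric hF hq₀ hq₁ hg)
  rwa [integral_congr_ae (hG.mono fun a ha => (ha.mul_right (F a)).tsum_eq)] at hsum

end GeometricallyBoundedWeights

theorem cauchy_area_potential_taylor_expansion_general
    (D : Set ℂ)
    (F : ℂ → ℂ) (hF : Integrable F)
    (c : ℂ) (hd : 0 < Metric.infDist c D)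
    (w : ℂ → ℂ)
    (hw : ∀ z, w z = ((2 * Real.pi : ℝ) : ℂ)⁻¹ * ∫ z' in D, F z' / (z - z')) :
    ∀ z : ℂ, ‖z - c‖ < Metric.infDist c D →
      (Summable fun j : ℕ =>
        ‖(z - c) ^ j * ∫ z' in D, F z' / (z' - c) ^ (j + 1)‖) ∧
      w z = -((2 * Real.pi : ℝ) : ℂ)⁻¹ *
        ∑' j : ℕ, (z - c) ^ j * ∫ z' in D, F z' / (z' - c) ^ (j + 1) := by
  intro z hz
  set d := infDist c D
  set g : ℕ → ℂ → ℂ := fun j z' => (z - c) ^ j / (z' - c) ^ (j + 1)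
  have hfar : ∀ᵐ z' ∂volume.restrict D, d ≤ ‖z' - c‖ :=
    ae_restrict_of_ae_restrict_of_subset subset_closure <|
      (ae_restrict_mem isClosed_closure.measurableSet).mono
        fun _ => infDist_le_norm_sub_of_mem_closure
  have hq₀ : 0 ≤ ‖z - c‖ / d := by positivity
  have hq₁ : ‖z - c‖ / d < 1 := (div_lt_one hd).2 hz
  have hg_meas : ∀ j, AEStronglyMeasurable (g j) (volume.restrict D) := fun j => by
    fun_prop
  have hg : ∀ j, ∀ᵐ z' ∂volume.restrict D, ‖g j z'‖ ≤ d⁻¹ * (‖z - c‖ / d) ^ j := fun j => by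
    filter_upwards [hfar] with z' hz'
    calc ‖g j z'‖ = ‖z - c‖ ^ j / ‖z' - c‖ ^ (j + 1) := by simp only [g, norm_div, norm_pow]
      _ ≤ ‖z - c‖ ^ j / d ^ (j + 1) := by gcongr
      _ = d⁻¹ * (‖z - c‖ / d) ^ j := by rw [div_pow, pow_succ]; field_simp
  have hterm : ∀ j : ℕ, (z - c) ^ j * ∫ z' in D, F z' / (z' - c) ^ (j + 1)
      = ∫ z' in D, g j z' * F z' := fun j => by
    rw [← integral_const_mul]
    congr 1 with z'
    ring
  simp only [hterm]
  refine ⟨(summable_integral_norm_mul_of_norm_le_geometric hF.restrict hq₀ hq₁ hg).of_nonneg_of_le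
    (fun _ => norm_nonneg _) (fun _ => norm_integral_le_integral_norm _), ?_⟩
  rw [hw, (hasSum_integral_mul_of_norm_le_geometric hF.restrict hq₀ hq₁ hg_meas hg
    (hfar.mono fun z' hz' => hasSum_pow_div_pow_succ_of_norm_lt (hz.trans_le hz'))).tsum_eq,
    neg_mul, ← mul_neg, ← integral_neg]
  congr 2 with z'
  rw [← neg_sub z z', inv_neg]
  ring

theorem cauchy_area_potential_taylor_expansion
    (D : Set ℂ) (hD : MeasurableSet D) (hDb : Bornology.IsBounded D)
    (F : ℂ → ℂ) (hF : Integrable F)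
    (hsupp : Function.support F ⊆ D)
    (c : ℂ) (hd : 0 < Metric.infDist c D)
    (w : ℂ → ℂ)
    (hw : ∀ z, w z = ((2 * Real.pi : ℝ) : ℂ)⁻¹ * ∫ z' in D, F z' / (z - z')) :
    ∀ z : ℂ, ‖z - c‖ < Metric.infDist c D →
      (Summable fun j : ℕ =>
        ‖(z - c) ^ j * ∫ z' in D, F z' / (z' - c) ^ (j + 1)‖) ∧
      w z = -((2 * Real.pi : ℝ) : ℂ)⁻¹ *
        ∑' j : ℕ, (z - c) ^ j * ∫ z' in D, F z' / (z' - c) ^ (j + 1) :=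
  cauchy_area_potential_taylor_expansion_general D F hF c hd w hw
end

section
/- Let γ : (−ε, ε) → ℝ² be a twice continuously differentiable unit-speed planar curve (‖γ'(t)‖ = 1 for all t), let n(t) := (−γ₂'(t), γ₁'(t)) be the rotated unit normal, and let κ := ⟨γ''(0), n(0)⟩ be the signed curvature at t = 0. Then lim_{t → 0, t ≠ 0} ⟨γ(0) − γ(t), n(t)⟩ / ‖γ(0) − γ(t)‖² = κ / 2. Consequently, the normal derivative of the 2D Laplace Green's function G(x,x') = log‖x − x'‖/(2π) with respect to x' ∈ ∂D, i.e. G_n(x,x') = (1/2π) ⟨x − x', n(x')⟩/‖x − x'‖², extends continuously to the diagonal of a C² boundary curve with value κ(x)/(4π). -/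
open Filter

/-- Euclidean dot product on ℝ². -/
def dot (a b : ℝ × ℝ) : ℝ := a.1 * b.1 + a.2 * b.2

/-- Squared Euclidean norm on ℝ². -/
def normsq (a : ℝ × ℝ) : ℝ := a.1 ^ 2 + a.2 ^ 2

/-!
Put `δ(t) = γ(a) - γ(t)` and let `J` be the rotation by `π/2`. The numerator
`F(t) = ⟨δ(t), Jγ'(t)⟩` vanishes at `a`, and since `⟨γ', Jγ'⟩ = 0` its derivative is just
`⟨δ(t), Jγ''(t)⟩`. L'Hôpital against `(t - a)²` gives
`F(t) / (t - a)² → ⟨-γ'(a), Jγ''(a)⟩ / 2 = ⟨γ''(a), Jγ'(a)⟩ / 2 = κ / 2`, while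
`‖δ(t)‖² / (t - a)² → ‖γ'(a)‖² = 1` because the slopes of `γ` tend to `γ'(a)`.
-/

open Topology

section Calculus

variable {𝕜 E F : Type*} [NontriviallyNormedField 𝕜] [NormedAddCommGroup E] [NormedSpace 𝕜 E]
  [NormedAddCommGroup F] [NormedSpace 𝕜 F]

theorem HasDerivAt.fst {f : 𝕜 → E × F} {f' : E × F} {x : 𝕜} (h : HasDerivAt f f' x) :
    HasDerivAt (fun s => (f s).1) f'.1 x :=
  (ContinuousLinearMap.fst 𝕜 E F).hasFDerivAt.comp_hasDerivAt x h

theorem HasDerivAt.snd {f : 𝕜 → E × F} {f' : E × F} {x : 𝕜} (h : HasDerivAt f f' x) :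
    HasDerivAt (fun s => (f s).2) f'.2 x :=
  (ContinuousLinearMap.snd 𝕜 E F).hasFDerivAt.comp_hasDerivAt x h

theorem ContDiffAt.eventually_hasDerivAt {f : 𝕜 → F} {x : 𝕜} {n : ℕ}
    (h : ContDiffAt 𝕜 (n + 1) f x) : ∀ᶠ y in 𝓝 x, HasDerivAt f (deriv f y) y :=
  (h.eventually (by simp)).mono fun _ hy => (hy.differentiableAt (by simp)).hasDerivAt

end Calculus

def rot (v : ℝ × ℝ) : ℝ × ℝ := (-v.2, v.1)

@[simp]
theorem dot_rot_self (v : ℝ × ℝ) : dot v (rot v) = 0 := by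
  simp only [dot, rot]; ring

theorem dot_neg_rot (u v : ℝ × ℝ) : dot (-u) (rot v) = dot v (rot u) := by
  simp only [dot, rot, Prod.fst_neg, Prod.snd_neg]; ring

theorem dot_smul_left (c : ℝ) (u v : ℝ × ℝ) : dot (c • u) v = c * dot u v := by
  simp only [dot, Prod.smul_fst, Prod.smul_snd, smul_eq_mul]; ring

theorem normsq_smul (c : ℝ) (u : ℝ × ℝ) : normsq (c • u) = c ^ 2 * normsq u := by
  simp only [normsq, Prod.smul_fst, Prod.smul_snd, smul_eq_mul]; ring

theorem normsq_neg (u : ℝ × ℝ) : normsq (-u) = normsq u := by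
  simp only [normsq, Prod.fst_neg, Prod.snd_neg, neg_sq]

theorem continuous_dot : Continuous fun p : (ℝ × ℝ) × (ℝ × ℝ) => dot p.1 p.2 := by
  unfold dot; fun_prop

theorem continuous_normsq : Continuous normsq := by
  unfold normsq; fun_prop

theorem continuous_rot : Continuous rot := by
  unfold rot; fun_prop

theorem Filter.Tendsto.dot {α : Type*} {l : Filter α} {f g : α → ℝ × ℝ} {u v : ℝ × ℝ}
    (hf : Tendsto f l (𝓝 u)) (hg : Tendsto g l (𝓝 v)) :
    Tendsto (fun a => _root_.dot (f a) (g a)) l (𝓝 (_root_.dot u v)) :=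
  (continuous_dot.tendsto (u, v)).comp (hf.prodMk_nhds hg)

section Derivatives

variable {f g : ℝ → ℝ × ℝ} {f' g' : ℝ × ℝ} {t : ℝ}

theorem HasDerivAt.dot (hf : HasDerivAt f f' t) (hg : HasDerivAt g g' t) :
    HasDerivAt (fun s => _root_.dot (f s) (g s)) (_root_.dot f' (g t) + _root_.dot (f t) g') t :=
  ((hf.fst.mul hg.fst).add (hf.snd.mul hg.snd)).congr_deriv (by simp only [_root_.dot]; ring)

theorem HasDerivAt.rot (hf : HasDerivAt f f' t) :
    HasDerivAt (fun s => _root_.rot (f s)) (_root_.rot f') t :=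
  hf.snd.neg.prodMk hf.fst

end Derivatives

theorem HasDerivAt.tendsto_normsq_sub_div_sq {γ : ℝ → ℝ × ℝ} {v : ℝ × ℝ} {a : ℝ}
    (h : HasDerivAt γ v a) :
    Tendsto (fun t => normsq (γ a - γ t) / (t - a) ^ 2) (𝓝[≠] a) (𝓝 (normsq v)) := by
  refine ((continuous_normsq.tendsto v).comp (hasDerivAt_iff_tendsto_slope.mp h)).congr fun t => ?_
  rw [Function.comp_apply, slope_def_module, normsq_smul, ← normsq_neg, neg_sub, inv_pow,
    inv_mul_eq_div]

theorem ContDiffAt.tendsto_dot_sub_rot_deriv_div_sq {γ : ℝ → ℝ × ℝ} {a : ℝ}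
    (hγ : ContDiffAt ℝ 2 γ a) :
    Tendsto (fun t => dot (γ a - γ t) (rot (deriv γ t)) / (t - a) ^ 2) (𝓝[≠] a)
      (𝓝 (dot (deriv (deriv γ) a) (rot (deriv γ a)) / 2)) := by
  have hγ' : ContDiffAt ℝ 1 (deriv γ) a := hγ.derivWithin le_rfl
  have hnum : ∀ᶠ t in 𝓝 a, HasDerivAt (fun t => dot (γ a - γ t) (rot (deriv γ t)))
      (dot (γ a - γ t) (rot (deriv (deriv γ) t))) t := by
    filter_upwards [hγ.eventually_hasDerivAt, hγ'.eventually_hasDerivAt] with t h1 h2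
    simpa only [dot_neg_rot, dot_rot_self, zero_add] using (h1.const_sub (γ a)).dot h2.rot
  have hslope : Tendsto (fun t => (t - a)⁻¹ • (γ a - γ t)) (𝓝[≠] a) (𝓝 (-deriv γ a)) := by
    refine (hasDerivAt_iff_tendsto_slope.mp hγ.eventually_hasDerivAt.self_of_nhds).neg.congr
      fun t => ?_
    rw [slope_def_module, ← smul_neg, neg_sub]
  have hcurv : Tendsto (fun t => rot (deriv (deriv γ) t)) (𝓝[≠] a)
      (𝓝 (rot (deriv (deriv γ) a))) :=
    ((continuous_rot.tendsto _).comp (hγ'.derivWithin (m := 0) le_rfl).continuousAt.tendsto).mono_left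
      nhdsWithin_le_nhds
  have hdiv : Tendsto (fun t => dot (γ a - γ t) (rot (deriv (deriv γ) t)) / (2 * (t - a)))
      (𝓝[≠] a) (𝓝 (dot (deriv (deriv γ) a) (rot (deriv γ a)) / 2)) := by
    rw [← dot_neg_rot]
    refine ((hslope.dot hcurv).div_const 2).congr fun t => ?_
    rw [dot_smul_left, inv_mul_eq_div, div_div, mul_comm]
  refine HasDerivAt.lhopital_zero_nhdsNE (hnum.filter_mono nhdsWithin_le_nhds)
    (g' := fun t => 2 * (t - a)) ?_ ?_ ?_ ?_ hdiv
  · exact Eventually.of_forall fun t => by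
      simpa using ((hasDerivAt_id t).sub_const a).fun_pow 2
  · filter_upwards [self_mem_nhdsWithin] with t ht
    exact mul_ne_zero two_ne_zero (sub_ne_zero.mpr ht)
  · simpa [dot] using hnum.self_of_nhds.continuousAt.tendsto.mono_left nhdsWithin_le_nhds
  · exact tendsto_nhdsWithin_of_tendsto_nhds
      (((continuous_id.sub continuous_const).pow 2).tendsto' a 0 (by simp))

theorem green_normal_derivative_diagonal_limit
    (ε : ℝ) (hε : 0 < ε)
    (γ : ℝ → ℝ × ℝ) (hγ : ContDiffOn ℝ 2 γ (Set.Ioo (-ε) ε))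
    (hunit : ∀ t ∈ Set.Ioo (-ε) ε, normsq (deriv γ t) = 1)
    (n : ℝ → ℝ × ℝ) (hn : ∀ t, n t = (-(deriv γ t).2, (deriv γ t).1))
    (κ : ℝ) (hκ : κ = dot (deriv (deriv γ) 0) (n 0)) :
    Tendsto (fun t => dot (γ 0 - γ t) (n t) / normsq (γ 0 - γ t))
      (nhdsWithin 0 {(0 : ℝ)}ᶜ) (nhds (κ / 2)) ∧
    Tendsto (fun t => (2 * Real.pi)⁻¹ * (dot (γ 0 - γ t) (n t) / normsq (γ 0 - γ t)))
      (nhdsWithin 0 {(0 : ℝ)}ᶜ) (nhds (κ / (4 * Real.pi))) := by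
  have h0 : (0 : ℝ) ∈ Set.Ioo (-ε) ε := ⟨neg_lt_zero.mpr hε, hε⟩
  have hγ0 : ContDiffAt ℝ 2 γ 0 := hγ.contDiffAt (isOpen_Ioo.mem_nhds h0)
  have hnum := hγ0.tendsto_dot_sub_rot_deriv_div_sq
  have hden := (hγ0.differentiableAt (by simp)).hasDerivAt.tendsto_normsq_sub_div_sq
  rw [hunit 0 h0] at hden
  have hlim : Tendsto (fun t => dot (γ 0 - γ t) (n t) / normsq (γ 0 - γ t))
      (𝓝[≠] 0) (𝓝 (κ / 2)) := by
    rw [hκ, funext hn, ← div_one (_ / 2)]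
    refine (hnum.div hden one_ne_zero).congr' ?_
    filter_upwards [self_mem_nhdsWithin] with t ht
    exact div_div_div_cancel_right₀ (pow_ne_zero 2 (sub_ne_zero.mpr ht)) _ _
  refine ⟨hlim, ?_⟩
  convert hlim.const_mul (2 * Real.pi)⁻¹ using 2
  field_simp
  ring
end

section
/- Let k, c₁, c₂ ∈ ℝ, set α = 2 k² (c₁² − c₂²), and define g(x,y) = c₁ cosh(k y) − c₂ cos(k x) and u(x, y) = 2 log g(x,y) on the open set Ω = { (x,y) ∈ ℝ² : g(x,y) > 0 }. Then u satisfies the Poisson–Boltzmann equation Δu(x,y) = α e^{−u(x,y)} for all (x,y) ∈ Ω, and u vanishes on the level curve { (x,y) : g(x,y) = 1 }. -/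
/-!
For `u = 2 log g` one has `Δu = 2 (g Δg - |∇g|²) / g²`. For `g = c₁ cosh (k y) - c₂ cos (k x)`
the identities `cosh² - sinh² = 1` and `sin² + cos² = 1` make `g Δg - |∇g|²` the constant
`k² (c₁² - c₂²)`, while `e^{-u} = g⁻²`.
-/

/-- Partial derivative in the first (x) variable. -/
noncomputable def pdx (f : ℝ × ℝ → ℝ) (p : ℝ × ℝ) : ℝ := fderiv ℝ f p (1, 0)

/-- Partial derivative in the second (y) variable. -/
noncomputable def pdy (f : ℝ × ℝ → ℝ) (p : ℝ × ℝ) : ℝ := fderiv ℝ f p (0, 1)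

/-- The two-dimensional Laplacian. -/
noncomputable def lap (f : ℝ × ℝ → ℝ) (p : ℝ × ℝ) : ℝ :=
  pdx (pdx f) p + pdy (pdy f) p

open Real

theorem fderiv_fderiv_log_apply {E : Type*} [NormedAddCommGroup E] [NormedSpace ℝ E]
    {g : E → ℝ} {p : E} (hg : ContDiffAt ℝ 2 g p) (hp : g p ≠ 0) (v : E) :
    fderiv ℝ (fun q => fderiv ℝ (fun r => log (g r)) q v) p v =
      (g p * fderiv ℝ (fun q => fderiv ℝ g q v) p v - fderiv ℝ g p v ^ 2) / g p ^ 2 := by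
  have hnear : ∀ᶠ q in nhds p, DifferentiableAt ℝ g q ∧ g q ≠ 0 :=
    (hg.eventually (by simp)).and (hg.continuousAt.eventually_ne hp) |>.mono
      fun q hq => ⟨hq.1.differentiableAt (by norm_num), hq.2⟩
  have hlog : (fun q => fderiv ℝ (fun r => log (g r)) q v) =ᶠ[nhds p]
      fun q => fderiv ℝ g q v * (g q)⁻¹ := by
    filter_upwards [hnear] with q ⟨hdq, hq⟩
    rw [(hdq.hasFDerivAt.log hq).fderiv]
    simp [mul_comm]
  have hdv : HasFDerivAt (fun q => fderiv ℝ g q v) (fderiv ℝ (fun q => fderiv ℝ g q v) p) p :=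
    ((hg.fderiv_right (m := 1) (by norm_num)).differentiableAt (by norm_num)).clm_apply
      (differentiableAt_const v) |>.hasFDerivAt
  have hinv : HasFDerivAt (fun q => (g q)⁻¹) (-(g p ^ 2)⁻¹ • fderiv ℝ g p) p :=
    (hasDerivAt_inv hp).comp_hasFDerivAt p (hg.differentiableAt (by norm_num)).hasFDerivAt
  rw [hlog.fderiv_eq, (hdv.fun_mul hinv).fderiv]
  simp only [neg_smul, smul_neg, add_apply, neg_apply, smul_apply, smul_eq_mul]
  field_simp
  ring

theorem lap_log {g : ℝ × ℝ → ℝ} {p : ℝ × ℝ} (hg : ContDiffAt ℝ 2 g p) (hp : g p ≠ 0) :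
    lap (fun q => log (g q)) p =
      (g p * lap g p - (pdx g p ^ 2 + pdy g p ^ 2)) / g p ^ 2 := by
  unfold lap pdx pdy
  rw [fderiv_fderiv_log_apply hg hp, fderiv_fderiv_log_apply hg hp]
  ring

theorem pdx_const_mul (c : ℝ) (f : ℝ × ℝ → ℝ) :
    pdx (fun q => c * f q) = fun q => c * pdx f q := by
  ext q
  simp only [pdx]
  rw [show (fun q => c * f q) = c • f from rfl, fderiv_const_smul_field]
  rfl

theorem pdy_const_mul (c : ℝ) (f : ℝ × ℝ → ℝ) :
    pdy (fun q => c * f q) = fun q => c * pdy f q := by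
  ext q
  simp only [pdy]
  rw [show (fun q => c * f q) = c • f from rfl, fderiv_const_smul_field]
  rfl

theorem lap_const_mul (c : ℝ) (f : ℝ × ℝ → ℝ) (p : ℝ × ℝ) :
    lap (fun q => c * f q) p = c * lap f p := by
  simp only [lap, pdx_const_mul, pdy_const_mul]
  ring

theorem pdx_eq_of_hasDerivAt {f : ℝ × ℝ → ℝ} {p : ℝ × ℝ} {f' : ℝ}
    (hf : DifferentiableAt ℝ f p) (h : HasDerivAt (fun x => f (x, p.2)) f' p.1) :
    pdx f p = f' := by
  have hline : HasDerivAt (fun x : ℝ => (x, p.2)) ((1 : ℝ), (0 : ℝ)) p.1 :=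
    (hasDerivAt_id' p.1).prodMk (hasDerivAt_const p.1 p.2)
  exact (hf.hasFDerivAt.comp_hasDerivAt p.1 hline).unique h

theorem pdy_eq_of_hasDerivAt {f : ℝ × ℝ → ℝ} {p : ℝ × ℝ} {f' : ℝ}
    (hf : DifferentiableAt ℝ f p) (h : HasDerivAt (fun y => f (p.1, y)) f' p.2) :
    pdy f p = f' := by
  have hline : HasDerivAt (fun y : ℝ => (p.1, y)) ((0 : ℝ), (1 : ℝ)) p.2 :=
    (hasDerivAt_const p.2 p.1).prodMk (hasDerivAt_id' p.2)
  exact (hf.hasFDerivAt.comp_hasDerivAt p.2 hline).unique h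

noncomputable def coshSubCos (k c₁ c₂ : ℝ) (p : ℝ × ℝ) : ℝ :=
  c₁ * cosh (k * p.2) - c₂ * cos (k * p.1)

section CoshSubCos

variable (k c₁ c₂ : ℝ)

theorem contDiff_coshSubCos {n : WithTop ℕ∞} : ContDiff ℝ n (coshSubCos k c₁ c₂) := by
  unfold coshSubCos
  fun_prop

theorem pdx_coshSubCos : pdx (coshSubCos k c₁ c₂) = fun q => c₂ * k * sin (k * q.1) := by
  ext q
  refine pdx_eq_of_hasDerivAt
    ((contDiff_coshSubCos k c₁ c₂ (n := 1)).differentiable one_ne_zero q) ?_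
  have h := (((hasDerivAt_id' q.1).const_mul k).cos.const_mul c₂).const_sub
    (c₁ * cosh (k * q.2))
  exact h.congr_deriv (by ring)

theorem pdy_coshSubCos : pdy (coshSubCos k c₁ c₂) = fun q => c₁ * k * sinh (k * q.2) := by
  ext q
  refine pdy_eq_of_hasDerivAt
    ((contDiff_coshSubCos k c₁ c₂ (n := 1)).differentiable one_ne_zero q) ?_
  have h := (((hasDerivAt_id' q.2).const_mul k).cosh.const_mul c₁).sub_const
    (c₂ * cos (k * q.1))
  exact h.congr_deriv (by ring)

theorem lap_coshSubCos (p : ℝ × ℝ) :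
    lap (coshSubCos k c₁ c₂) p = k ^ 2 * (c₁ * cosh (k * p.2) + c₂ * cos (k * p.1)) := by
  have hx : pdx (fun q : ℝ × ℝ => c₂ * k * sin (k * q.1)) p =
      c₂ * k ^ 2 * cos (k * p.1) := by
    refine pdx_eq_of_hasDerivAt (by fun_prop) ?_
    exact (((hasDerivAt_id' p.1).const_mul k).sin.const_mul (c₂ * k)).congr_deriv (by ring)
  have hy : pdy (fun q : ℝ × ℝ => c₁ * k * sinh (k * q.2)) p =
      c₁ * k ^ 2 * cosh (k * p.2) := by
    refine pdy_eq_of_hasDerivAt (by fun_prop) ?_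
    exact (((hasDerivAt_id' p.2).const_mul k).sinh.const_mul (c₁ * k)).congr_deriv (by ring)
  rw [lap, pdx_coshSubCos, pdy_coshSubCos, hx, hy]
  ring

theorem coshSubCos_mul_lap_sub_sq_grad (p : ℝ × ℝ) :
    coshSubCos k c₁ c₂ p * lap (coshSubCos k c₁ c₂) p -
        (pdx (coshSubCos k c₁ c₂) p ^ 2 + pdy (coshSubCos k c₁ c₂) p ^ 2) =
      k ^ 2 * (c₁ ^ 2 - c₂ ^ 2) := by
  rw [lap_coshSubCos, pdx_coshSubCos, pdy_coshSubCos, coshSubCos]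
  linear_combination k ^ 2 * c₁ ^ 2 * cosh_sq_sub_sinh_sq (k * p.2) -
    k ^ 2 * c₂ ^ 2 * sin_sq_add_cos_sq (k * p.1)

end CoshSubCos

theorem poisson_boltzmann_exact_solution
    (k c₁ c₂ : ℝ) (α : ℝ) (hα : α = 2 * k ^ 2 * (c₁ ^ 2 - c₂ ^ 2))
    (g : ℝ × ℝ → ℝ)
    (hg : ∀ p : ℝ × ℝ, g p = c₁ * Real.cosh (k * p.2) - c₂ * Real.cos (k * p.1))
    (u : ℝ × ℝ → ℝ)
    (hu : ∀ p : ℝ × ℝ, u p = 2 * Real.log (g p)) :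
    (∀ p : ℝ × ℝ, 0 < g p → lap u p = α * Real.exp (-u p)) ∧
    (∀ p : ℝ × ℝ, g p = 1 → u p = 0) := by
  obtain rfl : g = coshSubCos k c₁ c₂ := funext hg
  obtain rfl : u = fun q => 2 * log (coshSubCos k c₁ c₂ q) := funext hu
  refine ⟨fun p hp => ?_, fun p hp => by simp [hp]⟩
  have hexp :
      exp (-(2 * log (coshSubCos k c₁ c₂ p))) = (coshSubCos k c₁ c₂ p ^ 2)⁻¹ := by
    rw [exp_neg, two_mul, exp_add, exp_log hp, sq]
  rw [lap_const_mul, lap_log (contDiff_coshSubCos k c₁ c₂).contDiffAt hp.ne',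
    coshSubCos_mul_lap_sub_sq_grad, hexp, hα]
  ring
end
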